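/- For a simple random walk on a finite connected graph G = (V,E), the effective resistance between two vertices satisfies R(q_1,q_2) = K(q_1,q_2)/(2|E|), where K(q_1,q_2) = H(q_1,q_2) + H(q_2,q_1) is the commute time; consequently if H(q_1,q_2) = H(q_2,q_1) (by symmetry), then R(q_1,q_2) = H(q_1,q_2)/|E|. -/

import Mathlib

/-!
Both sides are read off the graph Laplacian `L`. The unit-current potential solves
`L φ = 𝟙_{q₁} - 𝟙_{q₂}`, while the hitting-time recursion says that `L (H · b)` equals the degree
away from `b`; since the entries of `L x` always sum to zero, the value at `b` is `deg b - 2|E|`.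
Hence `2|E| φ - (H · q₂ - H · q₁)` is harmonic everywhere, so constant on the connected graph, and
comparing its values at `q₁` and `q₂` gives `2|E| (φ q₁ - φ q₂) = H(q₁,q₂) + H(q₂,q₁)`.
-/

open Finset Matrix

namespace SimpleGraph

variable {V : Type*} [Fintype V] (G : SimpleGraph V) [DecidableRel G.Adj]

theorem Connected.card_edgeFinset_pos [Nontrivial V] (hG : G.Connected) :
    0 < G.edgeFinset.card := by
  obtain ⟨v⟩ := hG.nonempty
  obtain ⟨w, hvw⟩ := (G.degree_pos_iff_exists_adj v).mp (hG.preconnected.degree_pos_of_nontrivial v)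
  exact card_pos.mpr ⟨s(v, w), G.mem_edgeFinset.mpr hvw⟩

variable [DecidableEq V]

theorem lapMatrix_mulVec_apply_eq_sum_sub {R : Type*} [CommRing R] (x : V → R) (v : V) :
    (G.lapMatrix R *ᵥ x) v = ∑ u ∈ G.neighborFinset v, (x v - x u) := by
  rw [lapMatrix_mulVec_apply, sum_sub_distrib, sum_const, card_neighborFinset_eq_degree,
    nsmul_eq_mul]

theorem sum_lapMatrix_mulVec {R : Type*} [CommRing R] (x : V → R) :
    ∑ v, (G.lapMatrix R *ᵥ x) v = 0 := by
  have hconst : G.lapMatrix R *ᵥ 1 = 0 := G.lapMatrix_mulVec_const_eq_zero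
  rw [← one_dotProduct, dotProduct_mulVec, ← mulVec_transpose, (isSymm_lapMatrix R G).eq, hconst,
    zero_dotProduct]

theorem lapMatrix_mulVec_apply_eq_neg_sum_erase {R : Type*} [CommRing R] (x : V → R) (b : V) :
    (G.lapMatrix R *ᵥ x) b = -∑ a ∈ univ.erase b, (G.lapMatrix R *ᵥ x) a := by
  rw [eq_neg_iff_add_eq_zero, add_sum_erase _ _ (mem_univ b), sum_lapMatrix_mulVec]

theorem lapMatrix_mulVec_eq_single_sub_single {R : Type*} [CommRing R] {φ : V → R} {q₁ q₂ : V}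
    (hne : q₁ ≠ q₂) (hharm : ∀ a, a ≠ q₁ → a ≠ q₂ → (G.lapMatrix R *ᵥ φ) a = 0)
    (hcurrent : (G.lapMatrix R *ᵥ φ) q₁ = 1) :
    G.lapMatrix R *ᵥ φ = Pi.single q₁ 1 - Pi.single q₂ 1 := by
  funext a
  rcases eq_or_ne a q₁ with rfl | h₁
  · simp [hcurrent, Pi.single_eq_of_ne hne]
  rcases eq_or_ne a q₂ with rfl | h₂
  · have hq₁ : q₁ ∈ univ.erase a := mem_erase.mpr ⟨hne, mem_univ q₁⟩
    rw [lapMatrix_mulVec_apply_eq_neg_sum_erase, sum_eq_single_of_mem q₁ hq₁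
      fun b hb hbq₁ => hharm b hbq₁ (ne_of_mem_erase hb)]
    simp [hcurrent, Pi.single_eq_of_ne h₁]
  · simp [hharm a h₁ h₂, Pi.single_eq_of_ne h₁, Pi.single_eq_of_ne h₂]

theorem lapMatrix_mulVec_apply_eq_degree_of_eq_one_add_average {h : V → ℝ} {a : V}
    (hdeg : 0 < G.degree a)
    (hrec : h a = 1 + (G.degree a : ℝ)⁻¹ * ∑ y ∈ G.neighborFinset a, h y) :
    (G.lapMatrix ℝ *ᵥ h) a = G.degree a := by
  have : (G.degree a : ℝ) ≠ 0 := by positivity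
  rw [lapMatrix_mulVec_apply, hrec]
  field_simp
  ring

theorem lapMatrix_mulVec_eq_degree_sub_single {h : V → ℝ} {b : V} (hdeg : ∀ a, 0 < G.degree a)
    (hrec : ∀ a, a ≠ b → h a = 1 + (G.degree a : ℝ)⁻¹ * ∑ y ∈ G.neighborFinset a, h y) :
    G.lapMatrix ℝ *ᵥ h =
      (fun a => (G.degree a : ℝ)) - Pi.single b (2 * (G.edgeFinset.card : ℝ)) := by
  have hrest : ∀ a ∈ univ.erase b, (G.lapMatrix ℝ *ᵥ h) a = G.degree a := fun a ha =>
    G.lapMatrix_mulVec_apply_eq_degree_of_eq_one_add_average (hdeg a) (hrec a (ne_of_mem_erase ha))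
  have hdegsum : ∑ a, (G.degree a : ℝ) = 2 * G.edgeFinset.card := by
    exact_mod_cast G.sum_degrees_eq_twice_card_edges
  funext a
  rw [Pi.sub_apply]
  rcases eq_or_ne a b with rfl | hab
  · rw [lapMatrix_mulVec_apply_eq_neg_sum_erase, sum_congr rfl hrest, sum_erase_eq_sub (mem_univ a),
      hdegsum, Pi.single_eq_same]
    ring
  · rw [hrest a (mem_erase.mpr ⟨hab, mem_univ a⟩), Pi.single_eq_of_ne hab, sub_zero]

theorem Connected.two_mul_card_edgeFinset_mul_sub_eq_commuteTime (hG : G.Connected)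
    {q₁ q₂ : V} (hne : q₁ ≠ q₂) {H : V → V → ℝ} (hH0 : ∀ b, H b b = 0)
    (hHrec : ∀ a b, a ≠ b →
      H a b = 1 + (G.degree a : ℝ)⁻¹ * ∑ y ∈ G.neighborFinset a, H y b)
    {φ : V → ℝ} (hφ : G.lapMatrix ℝ *ᵥ φ = Pi.single q₁ 1 - Pi.single q₂ 1) :
    2 * G.edgeFinset.card * (φ q₁ - φ q₂) = H q₁ q₂ + H q₂ q₁ := by
  have : Nontrivial V := nontrivial_of_ne q₁ q₂ hne
  have hdeg : ∀ a, 0 < G.degree a := fun a => hG.preconnected.degree_pos_of_nontrivial a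
  set c : ℝ := 2 * G.edgeFinset.card
  have hharmonic :
      G.lapMatrix ℝ *ᵥ (c • φ - ((fun a => H a q₂) - fun a => H a q₁)) = 0 := by
    rw [mulVec_sub, mulVec_smul, mulVec_sub, hφ,
      G.lapMatrix_mulVec_eq_degree_sub_single hdeg fun a ha => hHrec a q₂ ha,
      G.lapMatrix_mulVec_eq_degree_sub_single hdeg fun a ha => hHrec a q₁ ha]
    funext a
    simp only [Pi.sub_apply, Pi.smul_apply, smul_eq_mul, Pi.zero_apply, Pi.single_apply]
    split_ifs <;> ring
  have hconst := (lapMatrix_mulVec_eq_zero_iff_forall_reachable G).mp hharmonic q₁ q₂ (hG q₁ q₂)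
  simp only [Pi.sub_apply, Pi.smul_apply, smul_eq_mul, hH0] at hconst
  linarith

end SimpleGraph

open SimpleGraph

/-- Commute-time identity: in a finite connected graph with unit conductances,
if `H` satisfies the expected-hitting-time equations of the simple random walk
and `φ` is a unit-current potential between `q₁` and `q₂` (harmonic off
`{q₁,q₂}`, with unit current flowing out of `q₁`), so that the effective
resistance is `R(q₁,q₂) = φ q₁ − φ q₂`, then
`R(q₁,q₂) = (H(q₁,q₂) + H(q₂,q₁))/(2|E|)`; consequently, if
`H(q₁,q₂) = H(q₂,q₁)` then `R(q₁,q₂) = H(q₁,q₂)/|E|`. -/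
theorem stmt_17 {V : Type*} [Fintype V] [DecidableEq V]
    (G : SimpleGraph V) [DecidableRel G.Adj] (hconn : G.Connected)
    (q₁ q₂ : V) (hne : q₁ ≠ q₂)
    (H : V → V → ℝ)
    (hH0 : ∀ b, H b b = 0)
    (hHrec : ∀ a b, a ≠ b →
      H a b = 1 + (G.degree a : ℝ)⁻¹ * ∑ y ∈ G.neighborFinset a, H y b)
    (φ : V → ℝ)
    (hharm : ∀ a, a ≠ q₁ → a ≠ q₂ → ∑ y ∈ G.neighborFinset a, (φ a - φ y) = 0)
    (hcurrent : ∑ y ∈ G.neighborFinset q₁, (φ q₁ - φ y) = 1) :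
    φ q₁ - φ q₂ = (H q₁ q₂ + H q₂ q₁) / (2 * G.edgeFinset.card) ∧
    (H q₁ q₂ = H q₂ q₁ → φ q₁ - φ q₂ = H q₁ q₂ / G.edgeFinset.card) := by
  simp_rw [← lapMatrix_mulVec_apply_eq_sum_sub] at hharm hcurrent
  have hcommute := hconn.two_mul_card_edgeFinset_mul_sub_eq_commuteTime G hne hH0 hHrec
    (G.lapMatrix_mulVec_eq_single_sub_single hne hharm hcurrent)
  have : Nontrivial V := nontrivial_of_ne q₁ q₂ hne
  have hE : (0 : ℝ) < G.edgeFinset.card := by exact_mod_cast hconn.card_edgeFinset_pos G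
  refine ⟨by rw [eq_div_iff (by positivity)]; linarith, fun hsym => ?_⟩
  rw [eq_div_iff hE.ne']
  linarith
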